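/- Let (a_k)_{k≥0} be real numbers with a₀ ≠ 0 and |a_k| ≤ A·R^k for all k ≥ 0 (for some A, R > 0), let V(z) = Σ_{k≥0} a_k·z^k for |z| < 1/R, and let the polynomials {Pₙ} satisfy P₋₁ = 0, P₀ = 1 and x·Pₙ(x) = P_{n−1}(x) + Σ_{k=0}^{n} a_k·P_{n+1−k}(x) for n ≥ 0. If there exists a non-degenerate compactly supported probability measure ν on ℝ with ∫x dν = 0 such that ∫ Pₙ dν = 0 for all n ≥ 1, then a₀ = V(0) > 0 and V is the variance function of the CSK family generated by ν. -/

import Mathlib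

open MeasureTheory Filter

noncomputable section

/-- The Cauchy–Stieltjes kernel density `f(x,m) = V(m)/(V(m)+m(m-x))`. -/
def cskKernel (V : ℝ → ℝ) (m x : ℝ) : ℝ := V m / (V m + m * (m - x))

/-- `ν` is a non-degenerate, compactly supported probability measure on `ℝ` with mean `0`. -/
def IsCSKGenerator (ν : Measure ℝ) : Prop :=
  IsProbabilityMeasure ν ∧
  (∃ R : ℝ, ν (Set.Icc (-R) R)ᶜ = 0) ∧
  (∀ a : ℝ, ν ≠ Measure.dirac a) ∧
  (∫ x, x ∂ν) = 0

/-- `V` is the variance function of the CSK family generated by `ν`: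
`V` is real-analytic near `0`, `V 0 > 0`, and for all `m` near `0` the kernel
`f(x,m)` is a.e. nonnegative, integrates to `1`, and has mean `m`. -/
def IsCSKVarianceFun (ν : Measure ℝ) (V : ℝ → ℝ) : Prop :=
  AnalyticAt ℝ V 0 ∧ 0 < V 0 ∧
  ∃ ε > 0, ∀ m : ℝ, |m| < ε →
    (∀ᵐ x ∂ν, 0 ≤ cskKernel V m x) ∧
    (∫ x, cskKernel V m x ∂ν) = 1 ∧
    (∫ x, x * cskKernel V m x ∂ν) = m

/-- The class `𝒱` of variance functions of CSK families generated by
non-degenerate compactly supported probability measures with mean `0` and variance `1`. -/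
def memV (V : ℝ → ℝ) : Prop :=
  ∃ ν : Measure ℝ, IsCSKGenerator ν ∧ (∫ x, x ^ 2 ∂ν) = 1 ∧ IsCSKVarianceFun ν V

/-- The class `𝒱∞`: those `V` such that `m ↦ V (c * m)` is in `𝒱` for every real `c`. -/
def memVinf (V : ℝ → ℝ) : Prop := ∀ c : ℝ, memV (fun m => V (c * m))

/-
The recursion says that, for fixed `x`, the generating function `G(x, m) = ∑ Pₙ(x) mⁿ` satisfies
`(V(m) + m (m - x)) G(x, m) = V(m)` (multiply the recursion by `mⁿ⁺¹` and sum over `n`), so `G`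
is the Cauchy–Stieltjes kernel `f(x, m)`. Orthogonality gives `∫ Pₙ dν = δₙ₀`, and integrating the
recursion then gives `∫ x Pₙ dν = δₙ₁`; for `n = 1` this says `∫ x² dν = a₀`, which is positive
because `ν` is not a point mass. The bounds `|a_k| ≤ A Rᵏ` give `|Pₙ(x)| ≤ Mⁿ` on the support of
`ν`, so for small `m` the series `G` converges geometrically there and may be integrated termwise:
`∫ f dν = 1` and `∫ x f dν = m`.
-/

open Topology Finset

def SolvesRecurrence (a : ℕ → ℝ) (x : ℝ) (p : ℕ → ℝ) : Prop :=
  ∀ n, x * p n = (if n = 0 then 0 else p (n - 1)) + ∑ k ∈ range (n + 1), a k * p (n + 1 - k)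

namespace SolvesRecurrence

variable {a p : ℕ → ℝ} {x : ℝ}

theorem a_zero_mul_succ (hp : SolvesRecurrence a x p) (n : ℕ) :
    a 0 * p (n + 1) = x * p n - (if n = 0 then 0 else p (n - 1))
      - ∑ k ∈ range n, a (k + 1) * p (n - k) := by
  have h := hp n
  rw [sum_range_succ'] at h
  simp only [Nat.add_sub_add_right, Nat.sub_zero] at h
  linarith

theorem abs_sum_tail_le {A R M : ℝ} (ha : ∀ k, |a k| ≤ A * R ^ k) (hR : 0 ≤ R)
    (hMR : 2 * R ≤ M) {n : ℕ} (hp : ∀ j ≤ n, |p j| ≤ M ^ j) :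
    |∑ k ∈ range n, a (k + 1) * p (n - k)| ≤ 2 * A * R * M ^ n := by
  have hA : 0 ≤ A := by simpa using (abs_nonneg _).trans (ha 0)
  have hM : 0 ≤ M := by linarith
  have hterm : ∀ k ∈ range n, |a (k + 1) * p (n - k)| ≤ A * R * M ^ n * (1 / 2) ^ k := by
    intro k hk
    calc |a (k + 1) * p (n - k)| ≤ A * R ^ (k + 1) * M ^ (n - k) := by
          rw [abs_mul]
          exact mul_le_mul (ha _) (hp _ (Nat.sub_le n k)) (abs_nonneg _) (by positivity)
      _ = A * R * (R ^ k * M ^ (n - k)) := by ring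
      _ ≤ A * R * ((M / 2) ^ k * M ^ (n - k)) := by gcongr; linarith
      _ = A * R * M ^ n * (1 / 2) ^ k := by
          rw [← pow_mul_pow_sub M (mem_range.mp hk).le]; ring
  calc |∑ k ∈ range n, a (k + 1) * p (n - k)|
      ≤ ∑ k ∈ range n, A * R * M ^ n * (1 / 2) ^ k :=
        (abs_sum_le_sum_abs _ _).trans (sum_le_sum hterm)
    _ ≤ A * R * M ^ n * 2 := by
        rw [← mul_sum]; gcongr
        exact sum_geometric_two_le n
    _ = 2 * A * R * M ^ n := by ring

theorem abs_le_pow (hp : SolvesRecurrence a x p) (hp0 : p 0 = 1) (ha0 : a 0 ≠ 0)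
    {A R B M : ℝ} (ha : ∀ k, |a k| ≤ A * R ^ k) (hR : 0 ≤ R) (hx : |x| ≤ B) (hM : 1 ≤ M)
    (hMR : 2 * R ≤ M) (hMa : B + 1 + 2 * A * R ≤ |a 0| * M) (n : ℕ) : |p n| ≤ M ^ n := by
  induction n using Nat.strong_induction_on with
  | _ n ih =>
  rcases n with _ | n
  · simp [hp0]
  have hprev : |if n = 0 then 0 else p (n - 1)| ≤ M ^ n := by
    split_ifs with hn
    · simp [pow_nonneg (zero_le_one.trans hM)]
    · exact (ih _ (by omega)).trans (pow_le_pow_right₀ hM (Nat.sub_le n 1))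
  have htail := abs_sum_tail_le ha hR hMR (n := n) fun j hj => ih j (by omega)
  have hxp : |x * p n| ≤ B * M ^ n := by
    rw [abs_mul]; exact mul_le_mul hx (ih n (by omega)) (abs_nonneg _) ((abs_nonneg x).trans hx)
  have hlead : |a 0| * |p (n + 1)| ≤ |a 0| * M ^ (n + 1) := by
    calc |a 0| * |p (n + 1)| = |a 0 * p (n + 1)| := (abs_mul _ _).symm
      _ ≤ |x * p n| + |if n = 0 then 0 else p (n - 1)|
          + |∑ k ∈ range n, a (k + 1) * p (n - k)| := by
        rw [hp.a_zero_mul_succ]; exact (abs_sub _ _).trans (add_le_add_left (abs_sub _ _) _)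
      _ ≤ (B + 1 + 2 * A * R) * M ^ n := by linarith
      _ ≤ |a 0| * M * M ^ n := by gcongr
      _ = |a 0| * M ^ (n + 1) := by ring
  exact le_of_mul_le_mul_left hlead (abs_pos.mpr ha0)

theorem add_mul_tsum_eq (hp : SolvesRecurrence a x p) (hp0 : p 0 = 1) {m : ℝ}
    (ha : Summable fun k => ‖a k * m ^ k‖) (hpm : Summable fun n => ‖p n * m ^ n‖) :
    (∑' k, a k * m ^ k + m * (m - x)) * ∑' n, p n * m ^ n = ∑' k, a k * m ^ k := by
  set V := ∑' k, a k * m ^ k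
  set G := ∑' n, p n * m ^ n
  have hG : HasSum (fun n => p n * m ^ n) G := hpm.of_norm.hasSum
  have hG1 : HasSum (fun n => p (n + 1) * m ^ (n + 1)) (G - 1) := by
    simpa [hp0] using (hasSum_nat_add_iff' 1).mpr hG
  have hprev : HasSum (fun n => m ^ (n + 1) * if n = 0 then 0 else p (n - 1)) (m ^ 2 * G) := by
    have hshift : HasSum (fun n => m ^ (n + 1 + 1) * if n + 1 = 0 then 0 else p (n + 1 - 1))
        (m ^ 2 * G) := by
      have hterm : ∀ n, (m ^ (n + 1 + 1) * if n + 1 = 0 then 0 else p (n + 1 - 1))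
          = m ^ 2 * (p n * m ^ n) := fun n => by
        rw [if_neg n.succ_ne_zero, Nat.add_sub_cancel]; ring
      simpa only [hterm] using hG.mul_left (m ^ 2)
    have h := (hasSum_nat_add_iff
      (f := fun n => m ^ (n + 1) * if n = 0 then 0 else p (n - 1)) 1).mp hshift
    rwa [sum_range_one, if_pos rfl, mul_zero, add_zero] at h
  have hinner : ∀ n, ∑ k ∈ range (n + 1), a k * m ^ k * (p (n - k + 1) * m ^ (n - k + 1))
      = m * x * (p n * m ^ n) - m ^ (n + 1) * if n = 0 then 0 else p (n - 1) := by
    intro n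
    calc ∑ k ∈ range (n + 1), a k * m ^ k * (p (n - k + 1) * m ^ (n - k + 1))
        = m ^ (n + 1) * ∑ k ∈ range (n + 1), a k * p (n + 1 - k) := by
          rw [mul_sum]
          refine sum_congr rfl fun k hk => ?_
          rw [← Nat.sub_add_comm (Nat.lt_succ_iff.mp (mem_range.mp hk)),
            ← pow_mul_pow_sub m (mem_range.mp hk).le]
          ring
      _ = _ := by linear_combination m ^ (n + 1) * (hp n).symm
  have hcauchy : V * (G - 1) = m * x * G - m ^ 2 * G := by
    rw [← hG1.tsum_eq, tsum_mul_tsum_eq_tsum_sum_range_of_summable_norm ha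
      ((summable_nat_add_iff 1).mpr hpm), tsum_congr hinner]
    exact ((hG.mul_left (m * x)).sub hprev).tsum_eq
  linear_combination hcauchy

end SolvesRecurrence

theorem exists_abs_le_pow_of_recurrence {a : ℕ → ℝ} {p : ℕ → ℝ → ℝ}
    (hrec : ∀ x, SolvesRecurrence a x (p · x)) (hp0 : ∀ x, p 0 x = 1) (ha0 : a 0 ≠ 0)
    {A R : ℝ} (ha : ∀ k, |a k| ≤ A * R ^ k) (hR : 0 ≤ R) (B : ℝ) :
    ∃ M, 1 ≤ M ∧ ∀ x, |x| ≤ B → ∀ n, |p n x| ≤ M ^ n :=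
  ⟨max (max 1 (2 * R)) ((B + 1 + 2 * A * R) / |a 0|), le_max_of_le_left (le_max_left _ _),
    fun x hx => (hrec x).abs_le_pow (hp0 x) ha0 ha hR hx (le_max_of_le_left (le_max_left _ _))
      (le_max_of_le_left (le_max_right _ _))
      ((div_le_iff₀' (abs_pos.mpr ha0)).mp (le_max_right _ _))⟩

theorem eventually_mul_abs_lt_one (c : ℝ) : ∀ᶠ m in 𝓝 (0 : ℝ), c * |m| < 1 :=
  ContinuousAt.eventually_lt (f := fun m => c * |m|) (by fun_prop) continuousAt_const (by simp)

theorem summable_norm_mul_pow_of_abs_le {c : ℕ → ℝ} {C r m : ℝ} (hc : ∀ n, |c n| ≤ C * r ^ n)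
    (hr : 0 ≤ r) (hrm : r * |m| < 1) : Summable fun n => ‖c n * m ^ n‖ := by
  refine ((summable_geometric_of_lt_one (by positivity) hrm).mul_left C).of_nonneg_of_le
    (fun _ => norm_nonneg _) fun n => ?_
  rw [norm_mul, norm_pow, Real.norm_eq_abs, Real.norm_eq_abs, mul_pow, ← mul_assoc]
  gcongr
  exact hc n

theorem analyticAt_tsum_mul_pow_of_abs_le {a : ℕ → ℝ} {A R : ℝ} (hR : 0 < R)
    (ha : ∀ k, |a k| ≤ A * R ^ k) : AnalyticAt ℝ (fun z => ∑' k, a k * z ^ k) 0 := by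
  set p := FormalMultilinearSeries.ofScalars ℝ a
  have hp : 0 < p.radius := by
    refine lt_of_lt_of_le ?_ (p.le_radius_of_bound A (r := R⁻¹.toNNReal) fun n => ?_)
    · simpa using hR
    · rw [FormalMultilinearSeries.ofScalars_norm, Real.coe_toNNReal _ (by positivity),
        Real.norm_eq_abs]
      calc |a n| * R⁻¹ ^ n ≤ A * R ^ n * R⁻¹ ^ n := by gcongr; exact ha n
        _ = A := by rw [mul_assoc, ← mul_pow, mul_inv_cancel₀ hR.ne', one_pow, mul_one]
  convert (p.hasFPowerSeriesOnBall hp).analyticAt using 1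
  exact (FormalMultilinearSeries.ofScalarsSum_eq_tsum a).symm

theorem integral_sq_pos_of_ne_dirac {ν : Measure ℝ} [IsProbabilityMeasure ν]
    (hν : ν ≠ Measure.dirac 0) (hint : Integrable (fun x => x ^ 2) ν) :
    0 < ∫ x, x ^ 2 ∂ν := by
  refine (integral_nonneg fun x => sq_nonneg x).lt_of_ne fun h => hν ?_
  have hzero : id =ᵐ[ν] fun _ => (0 : ℝ) := by
    filter_upwards [(integral_eq_zero_iff_of_nonneg (fun x => sq_nonneg x) hint).mp h.symm]
      with x hx
    simpa using hx
  simpa using (ProbabilityTheory.hasLaw_dirac_of_ae_eq hzero).map_eq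

theorem Continuous.integrable_of_ae_mem_Icc {ν : Measure ℝ} [IsFiniteMeasure ν] {f : ℝ → ℝ}
    (hf : Continuous f) {a b : ℝ} (h : ∀ᵐ x ∂ν, x ∈ Set.Icc a b) : Integrable f ν := by
  rw [← Measure.restrict_eq_self_of_ae_mem h]
  exact hf.integrableOn_Icc

theorem integral_tsum_of_ae_norm_le {α : Type*} [MeasurableSpace α] {μ : Measure α}
    [IsFiniteMeasure μ] {F : ℕ → α → ℝ} {b : ℕ → ℝ} (hF : ∀ n, AEStronglyMeasurable (F n) μ)
    (hb : Summable b) (hle : ∀ n, ∀ᵐ x ∂μ, ‖F n x‖ ≤ b n) :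
    ∫ x, ∑' n, F n x ∂μ = ∑' n, ∫ x, F n x ∂μ := by
  refine (integral_tsum_of_summable_integral_norm
    (fun n => Integrable.of_bound (hF n) (b n) (hle n)) ?_).symm
  refine (hb.mul_left (μ.real Set.univ)).of_nonneg_of_le
    (fun n => integral_nonneg fun _ => norm_nonneg _) fun n => ?_
  simpa using integral_mono_of_nonneg (Eventually.of_forall fun _ => norm_nonneg _)
    (integrable_const (b n)) (hle n)

theorem integral_tsum_mul_pow_eq {α : Type*} [MeasurableSpace α] {μ : Measure α}
    [IsFiniteMeasure μ] {F : ℕ → α → ℝ} {C r m : ℝ} (hF : ∀ n, AEStronglyMeasurable (F n) μ)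
    (hle : ∀ n, ∀ᵐ x ∂μ, |F n x| ≤ C * r ^ n) (hr : 0 ≤ r) (hrm : r * |m| < 1) :
    ∫ x, ∑' n, F n x * m ^ n ∂μ = ∑' n, (∫ x, F n x ∂μ) * m ^ n := by
  rw [integral_tsum_of_ae_norm_le (fun n => (hF n).mul_const _)
    (summable_geometric_of_lt_one (by positivity) hrm |>.mul_left C) fun n => ?_]
  · simp only [integral_mul_const]
  filter_upwards [hle n] with x hx
  rw [norm_mul, norm_pow, Real.norm_eq_abs, Real.norm_eq_abs, mul_pow, ← mul_assoc]
  gcongr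

theorem isCSKVarianceFun_of_generatingFun {ν : Measure ℝ} {V : ℝ → ℝ} (hV : AnalyticAt ℝ V 0)
    (hV0 : 0 < V 0) {B : ℝ} (hB : ∀ᵐ x ∂ν, |x| ≤ B) (G : ℝ → ℝ → ℝ)
    (hG : ∀ᶠ m in 𝓝 0, (∀ᵐ x ∂ν, (V m + m * (m - x)) * G m x = V m) ∧
      ∫ x, G m x ∂ν = 1 ∧ ∫ x, x * G m x ∂ν = m) :
    IsCSKVarianceFun ν V := by
  have hpos : ∀ᶠ m in 𝓝 0, |m| * (|m| + B) < V m := by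
    have hcont : ContinuousAt (fun m => V m - |m| * (|m| + B)) 0 :=
      hV.continuousAt.sub (by fun_prop)
    filter_upwards [hcont.eventually (lt_mem_nhds (by simpa using hV0))] with m hm
    linarith
  obtain ⟨ε, hε, hsmall⟩ := Metric.eventually_nhds_iff.mp (hpos.and hG)
  refine ⟨hV, hV0, ε, hε, fun m hm => ?_⟩
  obtain ⟨hVm, hid, hmass, hmean⟩ := hsmall (by simpa using hm)
  have hdom : ∀ᵐ x ∂ν, |m * (m - x)| < V m := by
    filter_upwards [hB] with x hx
    refine lt_of_le_of_lt ?_ hVm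
    rw [abs_mul]; gcongr; exact (abs_sub _ _).trans (by gcongr)
  have hden : ∀ᵐ x ∂ν, 0 < V m + m * (m - x) := by
    filter_upwards [hdom] with x hx
    linarith [neg_abs_le (m * (m - x))]
  have hker : cskKernel V m =ᵐ[ν] G m := by
    filter_upwards [hden, hid] with x hx hGx
    rw [cskKernel, div_eq_iff hx.ne']
    exact hGx.symm.trans (mul_comm _ _)
  have hker' : (fun x => x * cskKernel V m x) =ᵐ[ν] fun x => x * G m x :=
    hker.mono fun x hx => congrArg (x * ·) hx
  refine ⟨?_, by rwa [integral_congr_ae hker], by rwa [integral_congr_ae hker']⟩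
  filter_upwards [hdom, hden] with x hx hx'
  exact div_nonneg ((abs_nonneg _).trans hx.le) hx'.le

section Moments

variable {ν : Measure ℝ} {a : ℕ → ℝ} {p : ℕ → ℝ → ℝ}

theorem integral_mul_eq_ite_of_recurrence (hrec : ∀ x, SolvesRecurrence a x (p · x))
    (hint : ∀ n, Integrable (p n) ν) (hmom : ∀ n, ∫ x, p n x ∂ν = if n = 0 then 1 else 0)
    (n : ℕ) : ∫ x, x * p n x ∂ν = if n = 1 then 1 else 0 := by
  have hprev : Integrable (fun x => if n = 0 then 0 else p (n - 1) x) ν := by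
    split_ifs
    · exact integrable_zero _ _ _
    · exact hint _
  rw [integral_congr_ae (Eventually.of_forall fun x => hrec x n),
    integral_add hprev (integrable_finsetSum _ fun k _ => (hint _).const_mul _),
    integral_finsetSum _ fun k _ => (hint _).const_mul _]
  have htail : ∀ k ∈ range (n + 1), ∫ x, a k * p (n + 1 - k) x ∂ν = 0 := fun k hk => by
    rw [integral_const_mul, hmom, if_neg (by have := mem_range.mp hk; omega), mul_zero]
  rw [sum_eq_zero htail, add_zero]
  rcases n with _ | n
  · simp
  · simp [hmom]

theorem integral_sq_eq_of_recurrence (hrec : ∀ x, SolvesRecurrence a x (p · x))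
    (hp0 : ∀ x, p 0 x = 1) (hmul : ∫ x, x * p 1 x ∂ν = 1) : ∫ x, x ^ 2 ∂ν = a 0 := by
  have hx : ∀ x, x ^ 2 = a 0 * (x * p 1 x) := fun x => by
    have h0 : x = a 0 * p 1 x := by simpa [hp0] using hrec x 0
    linear_combination x * h0
  simp_rw [hx, integral_const_mul, hmul, mul_one]

theorem integral_tsum_mul_pow_of_moments [IsFiniteMeasure ν] {B M m : ℝ}
    (hB : ∀ᵐ x ∂ν, |x| ≤ B) (hp : ∀ n, AEStronglyMeasurable (p n) ν)
    (hgrowth : ∀ n, ∀ᵐ x ∂ν, |p n x| ≤ M ^ n) (hM : 0 ≤ M) (hm : M * |m| < 1)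
    (hmom0 : ∀ n, ∫ x, p n x ∂ν = if n = 0 then 1 else 0)
    (hmom1 : ∀ n, ∫ x, x * p n x ∂ν = if n = 1 then 1 else 0) :
    ∫ x, ∑' n, p n x * m ^ n ∂ν = 1 ∧ ∫ x, x * ∑' n, p n x * m ^ n ∂ν = m := by
  constructor
  · rw [integral_tsum_mul_pow_eq hp (C := 1) (by simpa using hgrowth) hM hm]
    simp [hmom0]
  · simp_rw [← tsum_mul_left, ← mul_assoc]
    rw [integral_tsum_mul_pow_eq (F := fun n x => x * p n x) (C := B)
      (fun n => aestronglyMeasurable_id.mul (hp n))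
      (fun n => ?_) hM hm]
    · simp [hmom1]
    filter_upwards [hB, hgrowth n] with x hx hpx
    rw [abs_mul]
    exact mul_le_mul hx hpx (abs_nonneg _) ((abs_nonneg x).trans hx)

end Moments

theorem recursion_orthogonality_variance_general (a : ℕ → ℝ) (A R : ℝ)
    (hR : 0 < R)
    (hbound : ∀ k : ℕ, |a k| ≤ A * R ^ k)
    (P : ℕ → Polynomial ℝ) (hP0 : P 0 = 1)
    (hrec : ∀ n : ℕ, Polynomial.X * P n =
      (if n = 0 then 0 else P (n - 1)) +
        ∑ k ∈ Finset.range (n + 1), Polynomial.C (a k) * P (n + 1 - k))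
    (ν : Measure ℝ) (hν : IsCSKGenerator ν)
    (horth : ∀ n : ℕ, 1 ≤ n → (∫ x, (P n).eval x ∂ν) = 0) :
    0 < a 0 ∧ IsCSKVarianceFun ν (fun z => ∑' k : ℕ, a k * z ^ k) := by
  obtain ⟨hprob, ⟨B, hsupp⟩, hnd, -⟩ := hν
  have hIcc : ∀ᵐ x ∂ν, x ∈ Set.Icc (-B) B := mem_ae_iff.mpr hsupp
  have hB : ∀ᵐ x ∂ν, |x| ≤ B := hIcc.mono fun x hx => abs_le.mpr hx
  have hrecE : ∀ x, SolvesRecurrence a x fun n => (P n).eval x := fun x n => by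
    simpa [Polynomial.eval_finsetSum, apply_ite] using congrArg (Polynomial.eval x) (hrec n)
  have hP0E : ∀ x, (P 0).eval x = 1 := by simp [hP0]
  have hint : ∀ n, Integrable (fun x => (P n).eval x) ν :=
    fun n => (P n).continuous.integrable_of_ae_mem_Icc hIcc
  have hmom0 : ∀ n, ∫ x, (P n).eval x ∂ν = if n = 0 then 1 else 0 := by
    rintro (_ | n)
    · simp [hP0]
    · exact horth _ n.succ_pos
  have hmom1 := integral_mul_eq_ite_of_recurrence hrecE hint hmom0
  have ha0 : 0 < a 0 := by
    rw [← integral_sq_eq_of_recurrence hrecE hP0E (by simpa using hmom1 1)]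
    exact integral_sq_pos_of_ne_dirac (hnd 0) ((continuous_pow 2).integrable_of_ae_mem_Icc hIcc)
  obtain ⟨M, hM, hgrowth⟩ := exists_abs_le_pow_of_recurrence hrecE hP0E ha0.ne' hbound hR.le B
  have hV0 : ∑' k, a k * (0 : ℝ) ^ k = a 0 := by
    rw [tsum_eq_single 0 fun k hk => by simp [hk], pow_zero, mul_one]
  refine ⟨ha0, isCSKVarianceFun_of_generatingFun (analyticAt_tsum_mul_pow_of_abs_le hR hbound)
    (hV0 ▸ ha0) hB (fun m x => ∑' n, (P n).eval x * m ^ n) ?_⟩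
  filter_upwards [eventually_mul_abs_lt_one M, eventually_mul_abs_lt_one R] with m hMm hRm
  exact ⟨hB.mono fun x hx => (hrecE x).add_mul_tsum_eq (hP0E x)
      (summable_norm_mul_pow_of_abs_le hbound hR.le hRm)
      (summable_norm_mul_pow_of_abs_le (C := 1) (by simpa using hgrowth x hx) (by linarith) hMm),
    integral_tsum_mul_pow_of_moments hB (fun n => (hint n).aestronglyMeasurable)
      (fun n => hB.mono fun x hx => hgrowth x hx n) (by linarith) hMm hmom0 hmom1⟩

/-- If the polynomials `Pₙ` satisfy the recursion `x·Pₙ = P_{n−1} + Σ_{k=0}^{n} a_k·P_{n+1−k}`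
(with `P₋₁ = 0`, `P₀ = 1`, `a₀ ≠ 0`, `|a_k| ≤ A·R^k`) and there is a non-degenerate
compactly supported centered probability measure `ν` with `∫ Pₙ dν = 0` for all `n ≥ 1`,
then `a₀ = V(0) > 0` and `V(z) = Σ a_k·z^k` is the variance function of the CSK family
generated by `ν`. -/
theorem recursion_orthogonality_variance (a : ℕ → ℝ) (A R : ℝ)
    (hA : 0 < A) (hR : 0 < R) (ha0 : a 0 ≠ 0)
    (hbound : ∀ k : ℕ, |a k| ≤ A * R ^ k)
    (P : ℕ → Polynomial ℝ) (hP0 : P 0 = 1)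
    (hrec : ∀ n : ℕ, Polynomial.X * P n =
      (if n = 0 then 0 else P (n - 1)) +
        ∑ k ∈ Finset.range (n + 1), Polynomial.C (a k) * P (n + 1 - k))
    (ν : Measure ℝ) (hν : IsCSKGenerator ν)
    (horth : ∀ n : ℕ, 1 ≤ n → (∫ x, (P n).eval x ∂ν) = 0) :
    0 < a 0 ∧ IsCSKVarianceFun ν (fun z => ∑' k : ℕ, a k * z ^ k) :=
  recursion_orthogonality_variance_general a A R hR hbound P hP0 hrec ν hν horth
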